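/- arXiv:1112.3610 — 2 statements merged into one kernel-verified Lean document; each statement's English description precedes it below -/
import Mathlib

section
/- Heating is additive in the heating parameter: for any well-tempered scoring game G and integers s, t, the identity ∫^t ∫^s G = ∫^{t+s} G holds (as identity of game trees). -/
/-- Well-tempered scoring game trees: an integer (final score) or a position
with lists of Left and Right options. -/
inductive WT : Type where
  | int : ℤ → WT
  | node : List WT → List WT → WT

namespace WT

/-- Left options. -/
def lopts : WT → List WT
  | int _ => []
  | node L _ => L

/-- Right options. -/
def ropts : WT → List WT
  | int _ => []
  | node _ R => R

theorem sizeOf_lt_of_mem_lopts : ∀ {G g : WT}, g ∈ G.lopts → sizeOf g < sizeOf G := by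
  intro G g h
  cases G with
  | int n => simp [lopts] at h
  | node L R =>
    simp only [lopts] at h
    have h1 := List.sizeOf_lt_of_mem h
    have h2 : sizeOf (WT.node L R) = 1 + sizeOf L + sizeOf R := by simp
    omega

theorem sizeOf_lt_of_mem_ropts : ∀ {G g : WT}, g ∈ G.ropts → sizeOf g < sizeOf G := by
  intro G g h
  cases G with
  | int n => simp [ropts] at h
  | node L R =>
    simp only [ropts] at h
    have h1 := List.sizeOf_lt_of_mem h
    have h2 : sizeOf (WT.node L R) = 1 + sizeOf L + sizeOf R := by simp
    omega

/-- Disjunctive sum of two games. -/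
def add (G H : WT) : WT :=
  match G, H with
  | int m, int n => int (m + n)
  | G, H =>
    node ((G.lopts.attach.map fun g => add g.1 H) ++ (H.lopts.attach.map fun h => add G h.1))
         ((G.ropts.attach.map fun g => add g.1 H) ++ (H.ropts.attach.map fun h => add G h.1))
termination_by sizeOf G + sizeOf H
decreasing_by
  all_goals
    first
      | (have := sizeOf_lt_of_mem_lopts g.2; omega)
      | (have := sizeOf_lt_of_mem_lopts h.2; omega)
      | (have := sizeOf_lt_of_mem_ropts g.2; omega)
      | (have := sizeOf_lt_of_mem_ropts h.2; omega)

/-- Negation of a game: swap players and negate scores. -/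
def neg : WT → WT
  | int n => int (-n)
  | node L R =>
    node ((WT.node L R).ropts.attach.map fun g => neg g.1)
         ((WT.node L R).lopts.attach.map fun g => neg g.1)
termination_by G => sizeOf G
decreasing_by
  all_goals
    first
      | exact sizeOf_lt_of_mem_lopts g.2
      | exact sizeOf_lt_of_mem_ropts g.2

def lmax : List ℤ → ℤ
  | [] => 0
  | x :: xs => xs.foldl max x

def lmin : List ℤ → ℤ
  | [] => 0
  | x :: xs => xs.foldl min x

/-- The pair (left outcome, right outcome). -/
def out : WT → ℤ × ℤ
  | int n => (n, n)
  | node L R =>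
    (lmax ((WT.node L R).lopts.attach.map fun g => (out g.1).2),
     lmin ((WT.node L R).ropts.attach.map fun g => (out g.1).1))
termination_by G => sizeOf G
decreasing_by
  all_goals
    first
      | exact sizeOf_lt_of_mem_lopts g.2
      | exact sizeOf_lt_of_mem_ropts g.2

/-- Left outcome L(G): optimal score when Left moves first. -/
def Lout (G : WT) : ℤ := G.out.1

/-- Right outcome R(G): optimal score when Right moves first. -/
def Rout (G : WT) : ℤ := G.out.2

/-- `IsWT G p` : `G` is a well-tempered game of parity `p`
(`false` = even-tempered, `true` = odd-tempered). -/
inductive IsWT : WT → Bool → Prop where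
  | int (n : ℤ) : IsWT (WT.int n) false
  | node {L R : List WT} {p : Bool} (hL : L ≠ []) (hR : R ≠ [])
      (hLp : ∀ g ∈ L, IsWT g p) (hRp : ∀ g ∈ R, IsWT g p) :
      IsWT (WT.node L R) (!p)

/-- `G` is a well-tempered game (of some parity). -/
def Wt (G : WT) : Prop := ∃ p, IsWT G p

/-- Parity, computed structurally (`false` = even-tempered, `true` = odd-tempered;
agrees with `IsWT` on well-tempered games). -/
def par : WT → Bool
  | int _ => false
  | node [] _ => true
  | node (g :: _) _ => !(par g)

/-- Final score under optimal play when Left moves last. -/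
def Lf (G : WT) : ℤ := if G.par then G.Lout else G.Rout

/-- Final score under optimal play when Right moves last. -/
def Rf (G : WT) : ℤ := if G.par then G.Rout else G.Lout

/-- `G ≲ H` : for every well-tempered `X`, `L(G+X) ≤ L(H+X)` and `R(G+X) ≤ R(H+X)`. -/
def Le (G H : WT) : Prop :=
  ∀ X : WT, X.Wt → (G.add X).Lout ≤ (H.add X).Lout ∧ (G.add X).Rout ≤ (H.add X).Rout

/-- `G ≳ H`. -/
def Ge (G H : WT) : Prop := Le H G

/-- `G ≈ H` : equivalence of scoring games. -/
def Equiv (G H : WT) : Prop :=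
  ∀ X : WT, X.Wt → (G.add X).Lout = (H.add X).Lout ∧ (G.add X).Rout = (H.add X).Rout

/-- `G` and `H` are well-tempered with the same parity. -/
def SamePar (G H : WT) : Prop := ∃ p, IsWT G p ∧ IsWT H p

/-- `G` takes values in `S`: every integer subgame lies in `S`. -/
inductive Valued (S : Set ℤ) : WT → Prop where
  | int {n : ℤ} : n ∈ S → Valued S (WT.int n)
  | node {L R : List WT} : (∀ g ∈ L, Valued S g) → (∀ g ∈ R, Valued S g) →
      Valued S (WT.node L R)

/-- `Subgame H G` : `H` is a subgame of `G`. -/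
inductive Subgame : WT → WT → Prop where
  | refl (G : WT) : Subgame G G
  | left {H G' : WT} {L R : List WT} : G' ∈ L → Subgame H G' → Subgame H (WT.node L R)
  | right {H G' : WT} {L R : List WT} : G' ∈ R → Subgame H G' → Subgame H (WT.node L R)

/-- `gap G p` : supremum of `R(H) - L(H)` over subgames `H` of `G` of parity `p`
(as an element of `WithBot ℤ`; the supremum of the empty set is `⊥ = -∞`). -/
noncomputable def gap (G : WT) (p : Bool) : WithBot ℤ :=
  sSup {x : WithBot ℤ | ∃ H : WT, Subgame H G ∧ IsWT H p ∧ x = ((H.Rout - H.Lout : ℤ) : WithBot ℤ)}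

/-- Heating by `t`. -/
def heat (t : ℤ) : WT → WT
  | int n => int n
  | node L R =>
    node ((WT.node L R).lopts.attach.map fun g => (WT.int t).add (heat t g.1))
         ((WT.node L R).ropts.attach.map fun g => (WT.int (-t)).add (heat t g.1))
termination_by G => sizeOf G
decreasing_by
  all_goals
    first
      | exact sizeOf_lt_of_mem_lopts g.2
      | exact sizeOf_lt_of_mem_ropts g.2

end WT

/-! Heating commutes with translation by an integer, and translations compose additively.
Hence, heating the options of `heat s G` by `t` shifts them by `±t` on top of the `±s`
already there, which is exactly how `heat (t + s)` treats the options of `G`. -/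

namespace WT

theorem induction_on {P : WT → Prop} (G : WT) (int : ∀ n, P (int n))
    (node : ∀ L R, (∀ g ∈ L, P g) → (∀ g ∈ R, P g) → P (node L R)) : P G := by
  cases G with
  | int n => exact int n
  | node L R =>
    exact node L R (fun g hg => induction_on g int node) (fun g hg => induction_on g int node)
termination_by sizeOf G
decreasing_by
  · exact sizeOf_lt_of_mem_lopts (show g ∈ (WT.node L R).lopts from hg)
  · exact sizeOf_lt_of_mem_ropts (show g ∈ (WT.node L R).ropts from hg)

theorem int_add_int (m n : ℤ) : (int m).add (int n) = int (m + n) := by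
  rw [add]

theorem int_add_node (n : ℤ) (L R : List WT) :
    (int n).add (node L R) = node (L.map (int n).add) (R.map (int n).add) := by
  rw [add]
  · simp [lopts, ropts]
  -- side condition of the catch-all equation of `add`: the arguments are not both integers
  · rintro _ _ _ ⟨⟩

theorem heat_int (t n : ℤ) : heat t (int n) = int n := by
  rw [heat]

theorem heat_node (t : ℤ) (L R : List WT) :
    heat t (node L R) =
      node (L.map fun g => (int t).add (heat t g)) (R.map fun g => (int (-t)).add (heat t g)) := by
  rw [heat]
  simp [lopts, ropts]

theorem int_add_int_add (m n : ℤ) (G : WT) :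
    (int m).add ((int n).add G) = (int (m + n)).add G := by
  induction G using induction_on with
  | int k => simp only [int_add_int, add_assoc]
  | node L R ihL ihR =>
    simp only [int_add_node, List.map_map]
    congr 1
    · exact List.map_congr_left ihL
    · exact List.map_congr_left ihR

theorem heat_int_add (t n : ℤ) (G : WT) :
    heat t ((int n).add G) = (int n).add (heat t G) := by
  induction G using induction_on with
  | int k => simp only [int_add_int, heat_int]
  | node L R ihL ihR =>
    simp only [int_add_node, heat_node, List.map_map]
    congr 1
    · refine List.map_congr_left fun g hg => ?_
      simp only [Function.comp_apply, ihL g hg, int_add_int_add, add_comm]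
    · refine List.map_congr_left fun g hg => ?_
      simp only [Function.comp_apply, ihR g hg, int_add_int_add, add_comm]

end WT

theorem heat_heat_general (G : WT) (s t : ℤ) :
    WT.heat t (WT.heat s G) = WT.heat (t + s) G := by
  induction G using WT.induction_on with
  | int n => simp only [WT.heat_int]
  | node L R ihL ihR =>
    simp only [WT.heat_node, List.map_map]
    congr 1
    · refine List.map_congr_left fun g hg => ?_
      simp only [Function.comp_apply, WT.heat_int_add, WT.int_add_int_add, ihL g hg]
    · refine List.map_congr_left fun g hg => ?_
      simp only [Function.comp_apply, WT.heat_int_add, WT.int_add_int_add, ihR g hg, neg_add]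

/-- heating is additive in the heating parameter, as an identity of
game trees: ∫^t ∫^s G = ∫^{t+s} G. -/
theorem heat_heat (G : WT) (hG : G.Wt) (s t : ℤ) :
    WT.heat t (WT.heat s G) = WT.heat (t + s) G :=
  heat_heat_general G s t
end

section
/- If G ≲ H for well-tempered scoring games G, H (meaning L(G+X) ≤ L(H+X) and R(G+X) ≤ R(H+X) for every well-tempered game X), then G and H have the same parity: π(G) = π(H). -/
/-! Moving in the switch `{-N | N}` costs the mover `N`. In `K + {-N | N}`, with `K`
well-tempered and all its scores in `[a, b]`, the player who has to pay is the one who runs out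
of moves in `K` first: the second player if `K` is odd-tempered, the first player if `K` is
even-tempered (a move in `K` flips both its parity and who is to move). Hence
`L(K + {-N | N}) ≥ a + N` and `R(K + {-N | N}) ≤ b - N` for odd `K`, and `L(K + {-N | N}) ≤ b - N`,
`R(K + {-N | N}) ≥ a + N` for even `K`. For `N` beyond the scores of `G` and `H`, testing `G ≲ H`
against `X = {-N | N}` therefore forces equal parities. -/

namespace WT

open Filter Set

theorem lmax_eq_max {l : List ℤ} (hl : l ≠ []) : lmax l = l.max hl := by
  cases l with
  | nil => contradiction
  | cons x xs => rfl

theorem lmin_eq_min {l : List ℤ} (hl : l ≠ []) : lmin l = l.min hl := by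
  cases l with
  | nil => contradiction
  | cons x xs => rfl

theorem Lout_int (n : ℤ) : Lout (int n) = n := by simp [Lout, out]

theorem Rout_int (n : ℤ) : Rout (int n) = n := by simp [Rout, out]

theorem Lout_node (L R : List WT) : Lout (node L R) = lmax (L.map Rout) := by
  rw [Lout, out]; simp [lopts]; rfl

theorem Rout_node (L R : List WT) : Rout (node L R) = lmin (R.map Lout) := by
  rw [Rout, out]; simp [ropts]; rfl

theorem Rout_le_Lout_of_mem_lopts {G x : WT} (hx : x ∈ G.lopts) : Rout x ≤ Lout G := by
  cases G with
  | int n => simp [lopts] at hx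
  | node L R =>
    have hx' : Rout x ∈ L.map Rout := List.mem_map_of_mem hx
    rw [Lout_node, lmax_eq_max (List.ne_nil_of_mem hx')]
    exact List.le_max_of_mem hx'

theorem Lout_le {G : WT} (hG : G.lopts ≠ []) {c : ℤ} (h : ∀ x ∈ G.lopts, Rout x ≤ c) :
    Lout G ≤ c := by
  cases G with
  | int n => simp [lopts] at hG
  | node L R =>
    simp only [lopts] at hG h ⊢
    rw [Lout_node, lmax_eq_max (mt List.map_eq_nil_iff.mp hG), List.max_le_iff]
    simpa using h

theorem exists_mem_lopts_Lout_eq {G : WT} (hG : G.lopts ≠ []) :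
    ∃ x ∈ G.lopts, Lout G = Rout x := by
  cases G with
  | int n => simp [lopts] at hG
  | node L R =>
    simp only [lopts] at hG ⊢
    have hne : L.map Rout ≠ [] := by simpa using hG
    rw [Lout_node, lmax_eq_max hne]
    simpa [eq_comm] using List.max_mem hne

theorem Rout_le_Lout_of_mem_ropts {G x : WT} (hx : x ∈ G.ropts) : Rout G ≤ Lout x := by
  cases G with
  | int n => simp [ropts] at hx
  | node L R =>
    have hx' : Lout x ∈ R.map Lout := List.mem_map_of_mem hx
    rw [Rout_node, lmin_eq_min (List.ne_nil_of_mem hx')]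
    exact List.min_le_of_mem hx'

theorem le_Rout {G : WT} (hG : G.ropts ≠ []) {c : ℤ} (h : ∀ x ∈ G.ropts, c ≤ Lout x) :
    c ≤ Rout G := by
  cases G with
  | int n => simp [ropts] at hG
  | node L R =>
    simp only [ropts] at hG h ⊢
    rw [Rout_node, lmin_eq_min (mt List.map_eq_nil_iff.mp hG), List.le_min_iff]
    simpa using h

theorem exists_mem_ropts_Rout_eq {G : WT} (hG : G.ropts ≠ []) :
    ∃ x ∈ G.ropts, Rout G = Lout x := by
  cases G with
  | int n => simp [ropts] at hG
  | node L R =>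
    simp only [ropts] at hG ⊢
    have hne : R.map Lout ≠ [] := by simpa using hG
    rw [Rout_node, lmin_eq_min hne]
    simpa [eq_comm] using List.min_mem hne

theorem mem_lopts_add {G H x : WT} :
    x ∈ (G.add H).lopts ↔
      (∃ g ∈ G.lopts, g.add H = x) ∨ (∃ h ∈ H.lopts, G.add h = x) := by
  cases G <;> cases H <;> rw [add] <;> simp [lopts]

theorem mem_ropts_add {G H x : WT} :
    x ∈ (G.add H).ropts ↔
      (∃ g ∈ G.ropts, g.add H = x) ∨ (∃ h ∈ H.ropts, G.add h = x) := by
  cases G <;> cases H <;> rw [add] <;> simp [ropts]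

theorem eventually_valued_Icc : ∀ G : WT, ∀ᶠ M in atTop, Valued (Icc (-M) M) G
  | int n => (eventually_ge_atTop |n|).mono fun _ hM => .int (abs_le.mp hM)
  | node L R => by
    have hL := (L.finite_toSet.eventually_all).mpr fun g (_ : g ∈ L) => eventually_valued_Icc g
    have hR := (R.finite_toSet.eventually_all).mpr fun g (_ : g ∈ R) => eventually_valued_Icc g
    exact (hL.and hR).mono fun _ h => .node h.1 h.2

theorem IsWT.Lout_mem_Rout_mem_of_valued {S : Set ℤ} {G : WT} {p : Bool} (hG : IsWT G p)
    (hv : Valued S G) : Lout G ∈ S ∧ Rout G ∈ S := by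
  induction hG with
  | int n =>
    cases hv with
    | int hn => simpa [Lout_int, Rout_int] using hn
  | @node L R _ hL hR _ _ ihL ihR =>
    cases hv with
    | node hvL hvR =>
      obtain ⟨x, hx, hLx⟩ := exists_mem_lopts_Lout_eq (G := WT.node L R) hL
      obtain ⟨y, hy, hRy⟩ := exists_mem_ropts_Rout_eq (G := WT.node L R) hR
      exact ⟨hLx ▸ (ihL x hx (hvL x hx)).2, hRy ▸ (ihR y hy (hvR y hy)).1⟩

theorem IsWT.Lout_Rout_add_int {G : WT} {p : Bool} (hG : IsWT G p) (n : ℤ) :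
    Lout (G.add (WT.int n)) = Lout G + n ∧ Rout (G.add (WT.int n)) = Rout G + n := by
  induction hG with
  | int m => simp [add, Lout_int, Rout_int]
  | @node L R _ hL hR _ _ ihL ihR =>
    have hmemL : ∀ {x}, x ∈ ((WT.node L R).add (WT.int n)).lopts ↔
        ∃ g ∈ L, g.add (WT.int n) = x := by
      intro x; rw [mem_lopts_add]; simp [lopts]
    have hmemR : ∀ {x}, x ∈ ((WT.node L R).add (WT.int n)).ropts ↔
        ∃ g ∈ R, g.add (WT.int n) = x := by
      intro x; rw [mem_ropts_add]; simp [ropts]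
    obtain ⟨x, hx, hLx⟩ := exists_mem_lopts_Lout_eq (G := WT.node L R) hL
    obtain ⟨y, hy, hRy⟩ := exists_mem_ropts_Rout_eq (G := WT.node L R) hR
    constructor
    · apply le_antisymm
      · refine Lout_le (List.ne_nil_of_mem (hmemL.2 ⟨x, hx, rfl⟩)) fun _ hz => ?_
        obtain ⟨g, hg, rfl⟩ := hmemL.1 hz
        rw [(ihL g hg).2]
        linarith [Rout_le_Lout_of_mem_lopts (G := WT.node L R) hg]
      · have := Rout_le_Lout_of_mem_lopts (hmemL.2 ⟨x, hx, rfl⟩)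
        rw [(ihL x hx).2] at this
        linarith
    · apply le_antisymm
      · have := Rout_le_Lout_of_mem_ropts (hmemR.2 ⟨y, hy, rfl⟩)
        rw [(ihR y hy).1] at this
        linarith
      · refine le_Rout (List.ne_nil_of_mem (hmemR.2 ⟨y, hy, rfl⟩)) fun _ hz => ?_
        obtain ⟨g, hg, rfl⟩ := hmemR.1 hz
        rw [(ihR g hg).1]
        linarith [Rout_le_Lout_of_mem_ropts (G := WT.node L R) hg]

def switch (N : ℤ) : WT := node [int (-N)] [int N]

theorem isWT_switch (N : ℤ) : IsWT (switch N) true :=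
  IsWT.node (p := false) (by simp) (by simp) (by simp [IsWT.int]) (by simp [IsWT.int])

theorem mem_lopts_add_switch {G x : WT} {N : ℤ} :
    x ∈ (G.add (switch N)).lopts ↔
      (∃ g ∈ G.lopts, g.add (switch N) = x) ∨ G.add (int (-N)) = x := by
  rw [mem_lopts_add]; simp [switch, lopts]

theorem mem_ropts_add_switch {G x : WT} {N : ℤ} :
    x ∈ (G.add (switch N)).ropts ↔
      (∃ g ∈ G.ropts, g.add (switch N) = x) ∨ G.add (int N) = x := by
  rw [mem_ropts_add]; simp [switch, ropts]

section Switch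

variable {a b N : ℤ} {G : WT} {p : Bool}

theorem IsWT.Lout_add_switch_le (hG : IsWT G p) (hv : Valued (Icc a b) G)
    (h : ∀ g ∈ G.lopts, Rout (g.add (switch N)) ≤ b - N) :
    Lout (G.add (switch N)) ≤ b - N := by
  refine Lout_le (List.ne_nil_of_mem (mem_lopts_add_switch.2 (.inr rfl))) fun x hx => ?_
  obtain ⟨g, hg, rfl⟩ | rfl := mem_lopts_add_switch.1 hx
  · exact h g hg
  · rw [(hG.Lout_Rout_add_int (-N)).2]
    linarith [(hG.Lout_mem_Rout_mem_of_valued hv).2.2]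

theorem IsWT.le_Rout_add_switch (hG : IsWT G p) (hv : Valued (Icc a b) G)
    (h : ∀ g ∈ G.ropts, a + N ≤ Lout (g.add (switch N))) :
    a + N ≤ Rout (G.add (switch N)) := by
  refine le_Rout (List.ne_nil_of_mem (mem_ropts_add_switch.2 (.inr rfl))) fun x hx => ?_
  obtain ⟨g, hg, rfl⟩ | rfl := mem_ropts_add_switch.1 hx
  · exact h g hg
  · rw [(hG.Lout_Rout_add_int N).1]
    linarith [(hG.Lout_mem_Rout_mem_of_valued hv).1.1]

theorem IsWT.bounds_add_switch (hG : IsWT G p) (hv : Valued (Icc a b) G) :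
    bif p then a + N ≤ Lout (G.add (switch N)) ∧ Rout (G.add (switch N)) ≤ b - N
    else Lout (G.add (switch N)) ≤ b - N ∧ a + N ≤ Rout (G.add (switch N)) := by
  induction hG with
  | int m =>
    exact ⟨(IsWT.int m).Lout_add_switch_le hv (by simp [lopts]),
      (IsWT.int m).le_Rout_add_switch hv (by simp [ropts])⟩
  | @node L R p hL hR hLp hRp ihL ihR =>
    obtain _ | ⟨hvL, hvR⟩ := hv
    have hG := IsWT.node hL hR hLp hRp
    cases p with
    | false =>
      obtain ⟨g, hg⟩ := List.exists_mem_of_ne_nil L hL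
      obtain ⟨y, hy⟩ := List.exists_mem_of_ne_nil R hR
      have hg' : Rout (g.add (switch N)) ≤ Lout ((WT.node L R).add (switch N)) :=
        Rout_le_Lout_of_mem_lopts (mem_lopts_add_switch.2 (.inl ⟨g, hg, rfl⟩))
      have hy' : Rout ((WT.node L R).add (switch N)) ≤ Lout (y.add (switch N)) :=
        Rout_le_Lout_of_mem_ropts (mem_ropts_add_switch.2 (.inl ⟨y, hy, rfl⟩))
      exact ⟨(ihL g hg (hvL g hg)).2.trans hg', hy'.trans (ihR y hy (hvR y hy)).1⟩
    | true =>
      exact ⟨hG.Lout_add_switch_le (.node hvL hvR) fun g hg => (ihL g hg (hvL g hg)).2,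
        hG.le_Rout_add_switch (.node hvL hvR) fun g hg => (ihR g hg (hvR g hg)).1⟩

end Switch

end WT

/-- if G ≲ H then G and H have the same parity. -/
theorem parity_of_le (G H : WT) (p q : Bool) (hG : WT.IsWT G p) (hH : WT.IsWT H q)
    (h : WT.Le G H) : p = q := by
  obtain ⟨M, hvG, hvH⟩ := ((WT.eventually_valued_Icc G).and (WT.eventually_valued_Icc H)).exists
  have bG := hG.bounds_add_switch (N := M + 1) hvG
  have bH := hH.bounds_add_switch (N := M + 1) hvH
  obtain ⟨hL, hR⟩ := h (WT.switch (M + 1)) ⟨true, WT.isWT_switch (M + 1)⟩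
  cases p <;> cases q <;> simp only [cond_true, cond_false] at bG bH
  all_goals first | rfl | omega
end
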